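/- arXiv:2407.12147 — 2 statements merged into one kernel-verified Lean document; each statement's English description precedes it below -/
import Mathlib

section
/- For any vertex v of the augmented point set and the two added auxiliary points v_b = (v_x − ε, Bfirst(v)_y − ε) and v_{b'} = (Blast(v)_x + ε, v_y + ε): both v_b and v_{b'} lie on the bottom boundary of the augmented set, and any point adjacent to v_{b'} is adjacent to Blast(v), and any point adjacent to v_b is adjacent to Bfirst(v); hence distances between all original points are unchanged. -/
/-- `inTL p q` : point `p` lies in the top-left quadrant of point `q`. -/
def inTL (p q : ℝ × ℝ) : Prop := p.1 < q.1 ∧ q.2 < p.2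

/-- The permutation graph of a point set `S`: two points are adjacent iff both belong
to `S` and one lies in the top-left quadrant of the other. -/
def pGraph (S : Finset (ℝ × ℝ)) : SimpleGraph (ℝ × ℝ) where
  Adj p q := p ∈ S ∧ q ∈ S ∧ (inTL p q ∨ inTL q p)
  symm := by constructor; rintro p q ⟨hp, hq, h⟩; exact ⟨hq, hp, h.symm⟩
  loopless := by constructor; rintro p ⟨-, -, ⟨h, _⟩ | ⟨h, _⟩⟩ <;> exact lt_irrefl _ h

/-- `p` is on the top boundary of `S`: its top-left quadrant contains no point of `S`. -/
def onTop (S : Finset (ℝ × ℝ)) (p : ℝ × ℝ) : Prop := ∀ q ∈ S, ¬ inTL q p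

/-- `p` is on the bottom boundary of `S`: its bottom-right quadrant contains no point of `S`. -/
def onBottom (S : Finset (ℝ × ℝ)) (p : ℝ × ℝ) : Prop := ∀ q ∈ S, ¬ inTL p q

/-- All points of `S` have pairwise distinct x-coordinates and pairwise distinct
y-coordinates. -/
def DistinctCoords (S : Finset (ℝ × ℝ)) : Prop :=
  ∀ p ∈ S, ∀ q ∈ S, p ≠ q → p.1 ≠ q.1 ∧ p.2 ≠ q.2

/-!
The corner `v_b` sits just left of `v` and just below `Bfirst(v)`. A point of `S` in its
bottom-right quadrant would lie below-right of `v` and below `Bfirst(v)`; the bottom-boundary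
point below-right of it would then be a neighbour of `v` left of `Bfirst(v)`, because the bottom
boundary descends from left to right. Symmetrically for `v_{b'}` and `Blast(v)`.
Since the offset strips contain no point of `S`, every neighbour of `v_b` is a neighbour of
`Bfirst(v)` and every neighbour of `v_{b'}` one of `Blast(v)`. Sending `v_b ↦ Bfirst(v)` and
`v_{b'} ↦ Blast(v)` is therefore a graph homomorphism back onto the original graph fixing `S`,
so no shortcut between points of `S` is created.
-/

namespace SimpleGraph

variable {V : Type*} {G H : SimpleGraph V} {u v : V}

lemma edist_le_edist_of_hom (f : H →g G) (hu : f u = u) (hv : f v = v) :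
    G.edist u v ≤ H.edist u v := by
  by_cases hr : H.Reachable u v
  · obtain ⟨w, hw⟩ := hr.exists_walk_length_eq_edist
    rw [← hw, ← w.length_map f, ← Walk.length_copy _ hu hv]
    exact edist_le _
  · rw [edist_eq_top_of_not_reachable hr]
    exact le_top

lemma dist_eq_of_le_of_hom (hle : G ≤ H) (f : H →g G) (hu : f u = u) (hv : f v = v) :
    H.dist u v = G.dist u v :=
  congrArg ENat.toNat (le_antisymm (edist_anti hle) (edist_le_edist_of_hom f hu hv))

end SimpleGraph

lemma pGraph_mono {S T : Finset (ℝ × ℝ)} (h : S ⊆ T) : pGraph S ≤ pGraph T :=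
  fun _ _ ⟨hp, hq, hpq⟩ => ⟨h hp, h hq, hpq⟩

lemma dist_pGraph_insert {S : Finset (ℝ × ℝ)} {a c : ℝ × ℝ} (ha : a ∉ S) (hc : c ∈ S)
    (hdom : ∀ q, (pGraph (insert a S)).Adj q a → (pGraph (insert a S)).Adj q c)
    {p q : ℝ × ℝ} (hp : p ∈ S) (hq : q ∈ S) :
    (pGraph (insert a S)).dist p q = (pGraph S).dist p q := by
  classical
  have hca : c ≠ a := ne_of_mem_of_not_mem hc ha
  have restrict : ∀ x y, (pGraph (insert a S)).Adj x y → x ≠ a → y ≠ a → (pGraph S).Adj x y :=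
    fun x y h hx hy => ⟨Finset.mem_of_mem_insert_of_ne h.1 hx,
      Finset.mem_of_mem_insert_of_ne h.2.1 hy, h.2.2⟩
  have to_c : ∀ y, (pGraph (insert a S)).Adj y a → (pGraph S).Adj y c :=
    fun y h => restrict y c (hdom y h) h.ne hca
  let f : pGraph (insert a S) →g pGraph S :=
    { toFun := fun x => if x = a then c else x
      map_rel' := fun {x y} h => by
        by_cases hx : x = a <;> by_cases hy : y = a <;> simp only [hx, hy, if_true, if_false]
        · exact absurd (hx.trans hy.symm) h.ne
        · exact (to_c y (hx ▸ h.symm)).symm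
        · exact to_c x (hy ▸ h)
        · exact restrict x y h hx hy }
  exact SimpleGraph.dist_eq_of_le_of_hom (pGraph_mono (Finset.subset_insert a S)) f
    (if_neg (ne_of_mem_of_not_mem hp ha)) (if_neg (ne_of_mem_of_not_mem hq ha))

lemma not_inTL_self (p : ℝ × ℝ) : ¬ inTL p p := fun h => lt_irrefl _ h.1

section onBottom

variable {S T : Finset (ℝ × ℝ)} {a b c q r v : ℝ × ℝ}

lemma onBottom_insert_iff : onBottom (insert a S) b ↔ ¬ inTL b a ∧ onBottom S b :=
  Finset.forall_mem_insert _ _ _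

lemma forall_mem_insert_inTL_imp (hba : ¬ inTL b a) (h : ∀ q ∈ S, inTL q a → inTL q c) :
    ∀ q ∈ insert b S, inTL q a → inTL q c :=
  Finset.forall_mem_insert _ _ _ |>.2 ⟨fun hb => absurd hb hba, h⟩

lemma onBottom.anti (h : S ⊆ T) (hb : onBottom T b) : onBottom S b :=
  fun q hq => hb q (h hq)

lemma onBottom.inTL_of_adj (hb : onBottom S b) (h : (pGraph S).Adj v b) : inTL v b :=
  h.2.2.resolve_right (hb v h.1)

lemma onBottom.adj_of_adj (hb : onBottom S b) (hc : c ∈ S)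
    (h : ∀ q ∈ S, inTL q b → inTL q c) : ∀ q, (pGraph S).Adj q b → (pGraph S).Adj q c :=
  fun q hq => ⟨hq.1, hc, .inl (h q hq.1 (hb.inTL_of_adj hq))⟩

lemma onBottom.fst_lt_of_snd_lt (hS : DistinctCoords S) (hb : onBottom S b) (hbS : b ∈ S)
    (hr : r ∈ S) (h : r.2 < b.2) : r.1 < b.1 := by
  have hne : r.1 ≠ b.1 := (hS r hr b hbS fun hrb => h.ne (hrb ▸ rfl)).1
  exact lt_of_le_of_ne (not_lt.1 fun hlt => hb r hr ⟨hlt, h⟩) hne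

lemma exists_onBottom_adj_of_inTL (hv : v ∈ S) (hq : q ∈ S) (h : inTL v q) :
    ∃ r ∈ S, onBottom S r ∧ (pGraph S).Adj v r ∧ q.1 ≤ r.1 ∧ r.2 ≤ q.2 := by
  classical
  obtain ⟨r, hr, hmin⟩ := (S.filter fun r => q.1 ≤ r.1 ∧ r.2 ≤ q.2).exists_min_image Prod.snd
    ⟨q, Finset.mem_filter.2 ⟨hq, le_rfl, le_rfl⟩⟩
  obtain ⟨hrS, hqr, hrq⟩ := Finset.mem_filter.1 hr
  refine ⟨r, hrS, fun s hs hrs => ?_, ⟨hv, hrS, .inl ⟨h.1.trans_le hqr, hrq.trans_lt h.2⟩⟩, hqr, hrq⟩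
  have hsT : s ∈ S.filter fun r => q.1 ≤ r.1 ∧ r.2 ≤ q.2 :=
    Finset.mem_filter.2 ⟨hs, hqr.trans hrs.1.le, hrs.2.le.trans hrq⟩
  exact (hmin s hsT).not_gt hrs.2

end onBottom

section corners

variable {S : Finset (ℝ × ℝ)} {v bf bl q : ℝ × ℝ} {ε : ℝ}

lemma onBottom_bFirst_corner (hS : DistinctCoords S) (hv : v ∈ S) (hbfS : bf ∈ S)
    (hbfB : onBottom S bf) (hvbf : inTL v bf)
    (hmin : ∀ q ∈ S, onBottom S q → (pGraph S).Adj v q → bf.1 ≤ q.1) (hε : 0 ≤ ε)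
    (hstrip : ∀ q ∈ S, ¬ (v.1 - ε ≤ q.1 ∧ q.1 < v.1)) :
    onBottom S (v.1 - ε, bf.2 - ε) := by
  rintro q hq ⟨hq1, hq2⟩
  dsimp only at hq1 hq2
  have hqv : q.2 < v.2 := by linarith [hvbf.2]
  have hvq : v.1 < q.1 := lt_of_le_of_ne (not_lt.1 fun h => hstrip q hq ⟨hq1.le, h⟩)
    (hS v hv q hq fun hvq => hqv.ne (hvq ▸ rfl)).1
  obtain ⟨r, hr, hrB, hvr, -, hrq⟩ := exists_onBottom_adj_of_inTL hv hq ⟨hvq, hqv⟩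
  have := hbfB.fst_lt_of_snd_lt hS hbfS hr (by linarith)
  linarith [hmin r hr hrB hvr]

lemma onBottom_bLast_corner (hS : DistinctCoords S) (hv : v ∈ S) (hvbl : inTL v bl)
    (hmax : ∀ q ∈ S, onBottom S q → (pGraph S).Adj v q → q.1 ≤ bl.1) (hε : 0 ≤ ε)
    (hstrip : ∀ q ∈ S, ¬ (v.2 < q.2 ∧ q.2 ≤ v.2 + ε)) :
    onBottom S (bl.1 + ε, v.2 + ε) := by
  rintro q hq ⟨hq1, hq2⟩
  dsimp only at hq1 hq2
  have hvq : v.1 < q.1 := by linarith [hvbl.1]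
  have hqv : q.2 < v.2 := lt_of_le_of_ne (not_lt.1 fun h => hstrip q hq ⟨h, hq2.le⟩)
    (hS q hq v hv fun hqv => hvq.ne (hqv ▸ rfl)).2
  obtain ⟨r, hr, hrB, hvr, hqr, -⟩ := exists_onBottom_adj_of_inTL hv hq ⟨hvq, hqv⟩
  linarith [hmax r hr hrB hvr]

lemma inTL_bFirst_of_inTL_corner (hS : DistinctCoords S) (hq : q ∈ S) (hbfS : bf ∈ S)
    (hvbf : inTL v bf) (hε : 0 ≤ ε) (hstrip : ∀ q ∈ S, ¬ (bf.2 - ε ≤ q.2 ∧ q.2 < bf.2))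
    (h : inTL q (v.1 - ε, bf.2 - ε)) : inTL q bf := by
  obtain ⟨hq1, hq2⟩ := h
  dsimp only at hq1 hq2
  have hqbf : q.1 < bf.1 := by linarith [hvbf.1]
  exact ⟨hqbf, lt_of_le_of_ne (not_lt.1 fun h => hstrip q hq ⟨hq2.le, h⟩)
    (hS q hq bf hbfS fun hqb => hqbf.ne (hqb ▸ rfl)).2.symm⟩

lemma inTL_bLast_of_inTL_corner (hS : DistinctCoords S) (hq : q ∈ S) (hblS : bl ∈ S)
    (hvbl : inTL v bl) (hε : 0 ≤ ε) (hstrip : ∀ q ∈ S, ¬ (bl.1 < q.1 ∧ q.1 ≤ bl.1 + ε))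
    (h : inTL q (bl.1 + ε, v.2 + ε)) : inTL q bl := by
  obtain ⟨hq1, hq2⟩ := h
  dsimp only at hq1 hq2
  have hqbl : bl.2 < q.2 := by linarith [hvbl.2]
  exact ⟨lt_of_le_of_ne (not_lt.1 fun h => hstrip q hq ⟨h, hq1.le⟩)
    (hS q hq bl hblS fun hqb => hqbl.ne' (hqb ▸ rfl)).1, hqbl⟩

end corners

lemma pGraph_insert_pair_of_dominated {S : Finset (ℝ × ℝ)} {a b c d : ℝ × ℝ}
    (ha : a ∉ insert b S) (hb : b ∉ S) (hab : ¬ inTL a b) (hba : ¬ inTL b a)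
    (haB : onBottom S a) (hbB : onBottom S b) (hc : c ∈ S) (hd : d ∈ S)
    (hac : ∀ q ∈ S, inTL q a → inTL q c) (hbd : ∀ q ∈ S, inTL q b → inTL q d) :
    onBottom (insert a (insert b S)) a ∧ onBottom (insert a (insert b S)) b ∧
    (∀ q, (pGraph (insert a (insert b S))).Adj q b → (pGraph (insert a (insert b S))).Adj q d) ∧
    (∀ q, (pGraph (insert a (insert b S))).Adj q a → (pGraph (insert a (insert b S))).Adj q c) ∧
    ∀ p ∈ S, ∀ q ∈ S, (pGraph (insert a (insert b S))).dist p q = (pGraph S).dist p q := by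
  have hsub : insert b S ⊆ insert a (insert b S) := Finset.subset_insert _ _
  have hc' := hsub (Finset.mem_insert_of_mem hc)
  have hd' : d ∈ insert b S := Finset.mem_insert_of_mem hd
  have haB' : onBottom (insert a (insert b S)) a := by
    rw [onBottom_insert_iff, onBottom_insert_iff]
    exact ⟨not_inTL_self a, hab, haB⟩
  have hbB' : onBottom (insert a (insert b S)) b := by
    rw [onBottom_insert_iff, onBottom_insert_iff]
    exact ⟨hba, not_inTL_self b, hbB⟩
  have hbd' : ∀ q ∈ insert a (insert b S), inTL q b → inTL q d :=
    forall_mem_insert_inTL_imp hab (forall_mem_insert_inTL_imp (not_inTL_self b) hbd)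
  have hA := haB'.adj_of_adj hc'
    (forall_mem_insert_inTL_imp (not_inTL_self a) (forall_mem_insert_inTL_imp hba hac))
  refine ⟨haB', hbB', hbB'.adj_of_adj (hsub hd') hbd', hA, fun p hp q hq => ?_⟩
  rw [dist_pGraph_insert ha (Finset.mem_insert_of_mem hc) hA (Finset.mem_insert_of_mem hp)
      (Finset.mem_insert_of_mem hq),
    dist_pGraph_insert hb hd ((hbB'.anti hsub).adj_of_adj hd' fun r hr => hbd' r (hsub hr)) hp hq]

/-- for a vertex `v` of the point set and the two auxiliary points
`vb = (v.1 − ε, Bfirst(v).2 − ε)` and `vb' = (Blast(v).1 + ε, v.2 + ε)` (with `ε > 0`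
small enough that the offset strips contain no coordinates of points of `S`): both
`vb` and `vb'` lie on the bottom boundary of the augmented set, every point adjacent
to `vb'` is adjacent to `Blast(v)`, every point adjacent to `vb` is adjacent to
`Bfirst(v)`, and hence all distances between points of `S` are unchanged. -/
theorem stmt16 (S : Finset (ℝ × ℝ)) (hS : DistinctCoords S)
    (v : ℝ × ℝ) (hv : v ∈ S)
    (bf bl : ℝ × ℝ)
    (hbf : bf ∈ S ∧ onBottom S bf ∧ (pGraph S).Adj v bf ∧
      ∀ q ∈ S, onBottom S q → (pGraph S).Adj v q → bf.1 ≤ q.1)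
    (hbl : bl ∈ S ∧ onBottom S bl ∧ (pGraph S).Adj v bl ∧
      ∀ q ∈ S, onBottom S q → (pGraph S).Adj v q → q.1 ≤ bl.1)
    (ε : ℝ) (hε : 0 < ε)
    (hsmall₁ : ∀ q ∈ S, ¬ (v.1 - ε ≤ q.1 ∧ q.1 < v.1))
    (hsmall₂ : ∀ q ∈ S, ¬ (bf.2 - ε ≤ q.2 ∧ q.2 < bf.2))
    (hsmall₃ : ∀ q ∈ S, ¬ (bl.1 < q.1 ∧ q.1 ≤ bl.1 + ε))
    (hsmall₄ : ∀ q ∈ S, ¬ (v.2 < q.2 ∧ q.2 ≤ v.2 + ε))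
    (vb vb' : ℝ × ℝ)
    (hvb : vb = (v.1 - ε, bf.2 - ε)) (hvb' : vb' = (bl.1 + ε, v.2 + ε))
    (S' : Finset (ℝ × ℝ)) (hS' : S' = insert vb (insert vb' S)) :
    onBottom S' vb ∧ onBottom S' vb' ∧
    (∀ q ∈ S, (pGraph S').Adj q vb' → (pGraph S').Adj q bl) ∧
    (∀ q ∈ S, (pGraph S').Adj q vb → (pGraph S').Adj q bf) ∧
    (∀ p ∈ S, ∀ q ∈ S, (pGraph S').dist p q = (pGraph S).dist p q) := by
  obtain ⟨hbfS, hbfB, hbfA, hbfMin⟩ := hbf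
  obtain ⟨hblS, hblB, hblA, hblMax⟩ := hbl
  have hvbf := hbfB.inTL_of_adj hbfA
  have hvbl := hblB.inTL_of_adj hblA
  subst hvb hvb' hS'
  have hvb_lt : v.1 - ε < bl.1 + ε := by linarith [hvbl.1]
  have hvbS : (v.1 - ε, bf.2 - ε) ∉ insert (bl.1 + ε, v.2 + ε) S := by
    rw [Finset.mem_insert, not_or]
    exact ⟨fun h => hvb_lt.ne (congrArg Prod.fst h),
      fun h => hsmall₁ _ h ⟨le_rfl, by dsimp only; linarith⟩⟩
  have hvb'S : (bl.1 + ε, v.2 + ε) ∉ S := fun h => hsmall₃ _ h ⟨by dsimp only; linarith, le_rfl⟩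
  obtain ⟨hB, hB', hA', hA, hdist⟩ := pGraph_insert_pair_of_dominated hvbS hvb'S
    (fun h => by linarith [h.2, hvbf.2]) (fun h => h.1.not_gt hvb_lt)
    (onBottom_bFirst_corner hS hv hbfS hbfB hvbf hbfMin hε.le hsmall₁)
    (onBottom_bLast_corner hS hv hvbl hblMax hε.le hsmall₄) hbfS hblS
    (fun q hq => inTL_bFirst_of_inTL_corner hS hq hbfS hvbf hε.le hsmall₂)
    (fun q hq => inTL_bLast_of_inTL_corner hS hq hblS hvbl hε.le hsmall₃)
  exact ⟨hB, hB', fun q _ => hA' q, fun q _ => hA q, hdist⟩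
end

section
/- After adding for each original point the four auxiliary boundary points, for any two original points v, w: w lies in the bottom-right quadrant of v if and only if Bfirst(v) < Bfirst(w) ≤ Blast(w) < Blast(v) in the bottom-boundary order; symmetrically, w lies in the top-left quadrant of v iff Tfirst(v) < Tfirst(w) ≤ Tlast(w) < Tlast(v). -/
open scoped Pointwise

def IsFirstBottomNbr (S : Finset (ℝ × ℝ)) (v b : ℝ × ℝ) : Prop :=
  b ∈ S ∧ onBottom S b ∧ (pGraph S).Adj v b ∧
    ∀ q ∈ S, onBottom S q → (pGraph S).Adj v q → b.1 ≤ q.1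

def IsLastBottomNbr (S : Finset (ℝ × ℝ)) (v b : ℝ × ℝ) : Prop :=
  b ∈ S ∧ onBottom S b ∧ (pGraph S).Adj v b ∧
    ∀ q ∈ S, onBottom S q → (pGraph S).Adj v q → q.1 ≤ b.1

def IsFirstTopNbr (S : Finset (ℝ × ℝ)) (v t : ℝ × ℝ) : Prop :=
  t ∈ S ∧ onTop S t ∧ (pGraph S).Adj v t ∧
    ∀ q ∈ S, onTop S q → (pGraph S).Adj v q → t.1 ≤ q.1

def IsLastTopNbr (S : Finset (ℝ × ℝ)) (v t : ℝ × ℝ) : Prop :=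
  t ∈ S ∧ onTop S t ∧ (pGraph S).Adj v t ∧
    ∀ q ∈ S, onTop S q → (pGraph S).Adj v q → q.1 ≤ t.1

/-- `a` can serve as the auxiliary point `v_b` of `v`, where `f = Bfirst(v)`. -/
def IsBottomAuxBefore (S : Finset (ℝ × ℝ)) (v f a : ℝ × ℝ) : Prop :=
  a ∈ S ∧ onBottom S a ∧ a.1 < v.1 ∧ a.2 < f.2 ∧
    ∀ q ∈ S, q ≠ a → ¬ (a.1 ≤ q.1 ∧ q.1 < v.1)

/-- `a` can serve as the auxiliary point `v_b'` of `v`, where `l = Blast(v)`. -/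
def IsBottomAuxAfter (S : Finset (ℝ × ℝ)) (v l a : ℝ × ℝ) : Prop :=
  a ∈ S ∧ onBottom S a ∧ l.1 < a.1 ∧ v.2 < a.2 ∧
    ∀ q ∈ S, q ≠ a → ¬ (v.2 < q.2 ∧ q.2 ≤ a.2)

section BottomBoundary

variable {S : Finset (ℝ × ℝ)} {a b f l v w fv fw lv lw : ℝ × ℝ}

theorem inTL_of_adj_of_onBottom (hb : onBottom S b) (hadj : (pGraph S).Adj v b) : inTL v b :=
  hadj.2.2.resolve_right (hb v hadj.1)

theorem not_onBottom_of_adj_onBottom (hb : onBottom S b) (hadj : (pGraph S).Adj v b) :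
    ¬ onBottom S v :=
  fun hv => hv b hadj.2.1 (inTL_of_adj_of_onBottom hb hadj)

theorem DistinctCoords.fst_lt_of_snd_lt_of_onBottom (hS : DistinctCoords S) (ha : a ∈ S)
    (hb : b ∈ S) (hbot : onBottom S b) (h : a.2 < b.2) : a.1 < b.1 :=
  (not_lt.1 fun h' => hbot a ha ⟨h', h⟩).lt_of_ne
    (hS a ha b hb (ne_of_apply_ne Prod.snd h.ne)).1

namespace IsFirstBottomNbr

variable (h : IsFirstBottomNbr S v f)
include h

theorem mem : v ∈ S := h.2.2.1.1

theorem not_onBottom : ¬ onBottom S v := not_onBottom_of_adj_onBottom h.2.1 h.2.2.1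

theorem inTL_first : inTL v f := inTL_of_adj_of_onBottom h.2.1 h.2.2.1

theorem fst_le_of_inTL (hb : b ∈ S) (hbot : onBottom S b) (hvb : inTL v b) : f.1 ≤ b.1 :=
  h.2.2.2 b hb hbot ⟨h.mem, hb, Or.inl hvb⟩

theorem fst_le_fst (hl : IsLastBottomNbr S v l) : f.1 ≤ l.1 :=
  h.2.2.2 l hl.1 hl.2.1 hl.2.2.1

end IsFirstBottomNbr

namespace IsLastBottomNbr

variable (h : IsLastBottomNbr S v l)
include h

theorem mem : v ∈ S := h.2.2.1.1

theorem not_onBottom : ¬ onBottom S v := not_onBottom_of_adj_onBottom h.2.1 h.2.2.1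

theorem inTL_last : inTL v l := inTL_of_adj_of_onBottom h.2.1 h.2.2.1

theorem fst_le_of_inTL (hb : b ∈ S) (hbot : onBottom S b) (hvb : inTL v b) : b.1 ≤ l.1 :=
  h.2.2.2 b hb hbot ⟨h.mem, hb, Or.inl hvb⟩

theorem fst_lt_of_fst_lt_of_snd_lt (hS : DistinctCoords S) (hb : b ∈ S) (hbot : onBottom S b)
    (hlb : l.1 < b.1) (hvb : v.2 < b.2) : v.1 < b.1 := by
  by_contra! hbv
  have hne : b ≠ v := fun hbv => h.not_onBottom (hbv ▸ hbot)
  have hbv : b.1 < v.1 := hbv.lt_of_ne (hS b hb v h.mem hne).1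
  exact (hlb.trans_le (h.2.2.2 b hb hbot ⟨h.mem, hb, Or.inr ⟨hbv, hvb⟩⟩)).false

end IsLastBottomNbr

theorem IsFirstBottomNbr.fst_lt_fst_of_inTL (hS : DistinctCoords S)
    (hfv : IsFirstBottomNbr S v fv) (hfw : IsFirstBottomNbr S w fw)
    (ha : IsBottomAuxBefore S w fw a) (h : inTL v w) : fv.1 < fw.1 := by
  obtain ⟨haS, hbot, hax, hay, hstrip⟩ := ha
  have hva : v.1 < a.1 := not_le.1 fun hav =>
    hstrip v hfv.mem (fun hva => hfv.not_onBottom (hva ▸ hbot)) ⟨hav, h.1⟩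
  have hav : a.2 < v.2 := not_le.1 fun hva => hbot w hfw.mem ⟨hax, h.2.trans_le hva⟩
  calc fv.1 ≤ a.1 := hfv.fst_le_of_inTL haS hbot ⟨hva, hav⟩
    _ < fw.1 := hS.fst_lt_of_snd_lt_of_onBottom haS hfw.1 hfw.2.1 hay

theorem IsLastBottomNbr.fst_lt_fst_of_inTL (hS : DistinctCoords S)
    (hlv : IsLastBottomNbr S v lv) (hlw : IsLastBottomNbr S w lw)
    (ha : IsBottomAuxAfter S w lw a) (h : inTL v w) : lw.1 < lv.1 := by
  obtain ⟨haS, hbot, hax, hay, hstrip⟩ := ha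
  have hwa : w.1 < a.1 := hlw.fst_lt_of_fst_lt_of_snd_lt hS haS hbot hax hay
  have hav : a.2 < v.2 := not_le.1 fun hva =>
    hstrip v hlv.mem (fun hva => hlv.not_onBottom (hva ▸ hbot)) ⟨h.2, hva⟩
  calc lw.1 < a.1 := hax
    _ ≤ lv.1 := hlv.fst_le_of_inTL haS hbot ⟨h.1.trans hwa, hav⟩

theorem IsLastBottomNbr.snd_lt_of_fst_lt (hS : DistinctCoords S)
    (hlv : IsLastBottomNbr S v lv) (hlw : IsLastBottomNbr S w lw)
    (ha : IsBottomAuxAfter S v lv a) (hl : lw.1 < lv.1) (hx : v.1 < w.1) : w.2 < v.2 := by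
  obtain ⟨haS, hbot, hax, -, hstrip⟩ := ha
  by_contra! hy
  have hy : v.2 < w.2 :=
    hy.lt_of_ne (hS v hlv.mem w hlw.mem (ne_of_apply_ne Prod.fst hx.ne)).2
  have hwa : w ≠ a := fun hwa => hlw.not_onBottom (hwa ▸ hbot)
  have haw : a.2 < w.2 := not_le.1 fun hwa' => hstrip w hlw.mem hwa ⟨hy, hwa'⟩
  rcases (hS w hlw.mem a haS hwa).1.lt_or_gt with hwa' | haw'
  · linarith [hlw.fst_le_of_inTL haS hbot ⟨hwa', haw⟩]
  · linarith [hlw.inTL_last.1]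

theorem IsFirstBottomNbr.fst_lt_of_snd_lt (hS : DistinctCoords S)
    (hfv : IsFirstBottomNbr S v fv) (hfw : IsFirstBottomNbr S w fw)
    (ha : IsBottomAuxBefore S v fv a) (hf : fv.1 < fw.1) (hy : w.2 < v.2) : v.1 < w.1 := by
  obtain ⟨haS, hbot, -, hay, hstrip⟩ := ha
  by_contra! hx
  have hx : w.1 < v.1 :=
    hx.lt_of_ne (hS w hfw.mem v hfv.mem (ne_of_apply_ne Prod.snd hy.ne)).1
  have hwa : w ≠ a := fun hwa => hfw.not_onBottom (hwa ▸ hbot)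
  have hwa' : w.1 < a.1 := not_le.1 fun haw => hstrip w hfw.mem hwa ⟨haw, hx⟩
  have haf : a.1 < fv.1 := hS.fst_lt_of_snd_lt_of_onBottom haS hfv.1 hfv.2.1 hay
  rcases (hS w hfw.mem a haS hwa).2.lt_or_gt with hwy | hay'
  · linarith [hS.fst_lt_of_snd_lt_of_onBottom hfw.1 haS hbot (hfw.inTL_first.2.trans hwy)]
  · linarith [hfw.fst_le_of_inTL haS hbot ⟨hwa', hay'⟩]

theorem inTL_iff_of_bottomNbrs (hS : DistinctCoords S)
    (hfv : IsFirstBottomNbr S v fv) (hlv : IsLastBottomNbr S v lv)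
    (hfw : IsFirstBottomNbr S w fw) (hlw : IsLastBottomNbr S w lw)
    (hav : ∃ a, IsBottomAuxBefore S v fv a) (hav' : ∃ a, IsBottomAuxAfter S v lv a)
    (haw : ∃ a, IsBottomAuxBefore S w fw a) (haw' : ∃ a, IsBottomAuxAfter S w lw a) :
    inTL v w ↔ fv.1 < fw.1 ∧ fw.1 ≤ lw.1 ∧ lw.1 < lv.1 := by
  obtain ⟨av, hav⟩ := hav
  obtain ⟨av', hav'⟩ := hav'
  obtain ⟨aw, haw⟩ := haw
  obtain ⟨aw', haw'⟩ := haw'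
  refine ⟨fun h => ⟨hfv.fst_lt_fst_of_inTL hS hfw haw h, hfw.fst_le_fst hlw,
    hlv.fst_lt_fst_of_inTL hS hlw haw' h⟩, fun ⟨hf, _, hl⟩ => ?_⟩
  have hvw : v ≠ w := by
    rintro rfl
    exact (hf.trans_le (hfw.fst_le_of_inTL hfv.1 hfv.2.1 hfv.inTL_first)).false
  have hne := hS v hfv.mem w hfw.mem hvw
  rcases hne.1.lt_or_gt with hx | hx
  · exact ⟨hx, hlv.snd_lt_of_fst_lt hS hlw hav' hl hx⟩
  · rcases hne.2.lt_or_gt with hy | hy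
    · exact absurd (hfw.fst_lt_fst_of_inTL hS hfv hav ⟨hx, hy⟩) hf.not_gt
    · exact absurd (hfv.fst_lt_of_snd_lt hS hfw hav hf hy) hx.not_gt

end BottomBoundary

section Reflection

variable {S : Finset (ℝ × ℝ)} {a p q t v : ℝ × ℝ}

theorem inTL_neg : inTL (-p) (-q) ↔ inTL q p := by
  simp only [inTL, Prod.fst_neg, Prod.snd_neg, neg_lt_neg_iff]

theorem pGraph_neg_adj : (pGraph (-S)).Adj (-p) (-q) ↔ (pGraph S).Adj p q := by
  simp only [pGraph, Finset.mem_neg', neg_neg, inTL_neg]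
  tauto

theorem onBottom_neg : onBottom (-S) (-p) ↔ onTop S p := by
  refine ⟨fun h q hq hqp => h (-q) (Finset.neg_mem_neg hq) (inTL_neg.2 hqp),
    fun h q hq hpq => ?_⟩
  rw [← neg_neg q, inTL_neg] at hpq
  exact h (-q) (Finset.mem_neg'.1 hq) hpq

theorem DistinctCoords.neg (hS : DistinctCoords S) : DistinctCoords (-S) := by
  intro p hp q hq hpq
  have := hS (-p) (Finset.mem_neg'.1 hp) (-q) (Finset.mem_neg'.1 hq) (neg_injective.ne hpq)
  simpa using this

theorem IsLastTopNbr.neg (h : IsLastTopNbr S v t) : IsFirstBottomNbr (-S) (-v) (-t) := by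
  obtain ⟨ht, htop, hadj, hmax⟩ := h
  refine ⟨Finset.neg_mem_neg ht, onBottom_neg.2 htop, pGraph_neg_adj.2 hadj,
    fun q hq hbot hvq => ?_⟩
  rw [← neg_neg q] at hbot hvq ⊢
  have := hmax (-q) (Finset.mem_neg'.1 hq) (onBottom_neg.1 hbot) (pGraph_neg_adj.1 hvq)
  simp only [Prod.fst_neg] at this ⊢
  linarith

theorem IsFirstTopNbr.neg (h : IsFirstTopNbr S v t) : IsLastBottomNbr (-S) (-v) (-t) := by
  obtain ⟨ht, htop, hadj, hmin⟩ := h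
  refine ⟨Finset.neg_mem_neg ht, onBottom_neg.2 htop, pGraph_neg_adj.2 hadj,
    fun q hq hbot hvq => ?_⟩
  rw [← neg_neg q] at hbot hvq ⊢
  have := hmin (-q) (Finset.mem_neg'.1 hq) (onBottom_neg.1 hbot) (pGraph_neg_adj.1 hvq)
  simp only [Prod.fst_neg] at this ⊢
  linarith

theorem isBottomAuxBefore_neg (ha : a ∈ S) (htop : onTop S a) (hx : v.1 < a.1) (hy : t.2 < a.2)
    (hstrip : ∀ q ∈ S, q ≠ a → ¬ (v.1 < q.1 ∧ q.1 ≤ a.1)) :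
    IsBottomAuxBefore (-S) (-v) (-t) (-a) := by
  refine ⟨Finset.neg_mem_neg ha, onBottom_neg.2 htop, neg_lt_neg hx, neg_lt_neg hy,
    fun q hq hqa hq' => hstrip (-q) (Finset.mem_neg'.1 hq) (by rintro rfl; simp at hqa) ?_⟩
  simp only [Prod.fst_neg] at hq' ⊢
  constructor <;> linarith [hq'.1, hq'.2]

theorem isBottomAuxAfter_neg (ha : a ∈ S) (htop : onTop S a) (hx : a.1 < t.1) (hy : a.2 < v.2)
    (hstrip : ∀ q ∈ S, q ≠ a → ¬ (a.2 ≤ q.2 ∧ q.2 < v.2)) :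
    IsBottomAuxAfter (-S) (-v) (-t) (-a) := by
  refine ⟨Finset.neg_mem_neg ha, onBottom_neg.2 htop, neg_lt_neg hx, neg_lt_neg hy,
    fun q hq hqa hq' => hstrip (-q) (Finset.mem_neg'.1 hq) (by rintro rfl; simp at hqa) ?_⟩
  simp only [Prod.snd_neg] at hq' ⊢
  constructor <;> linarith [hq'.1, hq'.2]

end Reflection

theorem stmt17_general (S S' : Finset (ℝ × ℝ)) (hS' : DistinctCoords S')
    (Bf Bl Tf Tl : ℝ × ℝ → ℝ × ℝ)
    (hBf : ∀ v ∈ S, Bf v ∈ S' ∧ onBottom S' (Bf v) ∧ (pGraph S').Adj v (Bf v) ∧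
      ∀ q ∈ S', onBottom S' q → (pGraph S').Adj v q → (Bf v).1 ≤ q.1)
    (hBl : ∀ v ∈ S, Bl v ∈ S' ∧ onBottom S' (Bl v) ∧ (pGraph S').Adj v (Bl v) ∧
      ∀ q ∈ S', onBottom S' q → (pGraph S').Adj v q → q.1 ≤ (Bl v).1)
    (hTf : ∀ v ∈ S, Tf v ∈ S' ∧ onTop S' (Tf v) ∧ (pGraph S').Adj v (Tf v) ∧
      ∀ q ∈ S', onTop S' q → (pGraph S').Adj v q → (Tf v).1 ≤ q.1)
    (hTl : ∀ v ∈ S, Tl v ∈ S' ∧ onTop S' (Tl v) ∧ (pGraph S').Adj v (Tl v) ∧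
      ∀ q ∈ S', onTop S' q → (pGraph S').Adj v q → q.1 ≤ (Tl v).1)
    -- the auxiliary point `v_b = (v.1 − ε, Bfirst(v).2 − ε)`:
    (haux_b : ∀ v ∈ S, ∃ vb ∈ S', onBottom S' vb ∧
      vb.1 < v.1 ∧ vb.2 < (Bf v).2 ∧
      (∀ q ∈ S', q ≠ vb → ¬ (vb.1 ≤ q.1 ∧ q.1 < v.1)) ∧
      (∀ q ∈ S', q ≠ vb → ¬ (vb.2 ≤ q.2 ∧ q.2 < (Bf v).2)))
    -- the auxiliary point `v_b' = (Blast(v).1 + ε, v.2 + ε)`: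
    (haux_b' : ∀ v ∈ S, ∃ vb' ∈ S', onBottom S' vb' ∧
      (Bl v).1 < vb'.1 ∧ v.2 < vb'.2 ∧
      (∀ q ∈ S', q ≠ vb' → ¬ ((Bl v).1 < q.1 ∧ q.1 ≤ vb'.1)) ∧
      (∀ q ∈ S', q ≠ vb' → ¬ (v.2 < q.2 ∧ q.2 ≤ vb'.2)))
    -- the auxiliary point `v_t = (Tfirst(v).1 − ε, v.2 − ε)`:
    (haux_t : ∀ v ∈ S, ∃ vt ∈ S', onTop S' vt ∧
      vt.1 < (Tf v).1 ∧ vt.2 < v.2 ∧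
      (∀ q ∈ S', q ≠ vt → ¬ (vt.1 ≤ q.1 ∧ q.1 < (Tf v).1)) ∧
      (∀ q ∈ S', q ≠ vt → ¬ (vt.2 ≤ q.2 ∧ q.2 < v.2)))
    -- the auxiliary point `v_t' = (v.1 + ε, Tlast(v).2 + ε)`:
    (haux_t' : ∀ v ∈ S, ∃ vt' ∈ S', onTop S' vt' ∧
      v.1 < vt'.1 ∧ (Tl v).2 < vt'.2 ∧
      (∀ q ∈ S', q ≠ vt' → ¬ (v.1 < q.1 ∧ q.1 ≤ vt'.1)) ∧
      (∀ q ∈ S', q ≠ vt' → ¬ ((Tl v).2 < q.2 ∧ q.2 ≤ vt'.2))) :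
    ∀ v ∈ S, ∀ w ∈ S, v ≠ w →
      (inTL v w ↔ (Bf v).1 < (Bf w).1 ∧ (Bf w).1 ≤ (Bl w).1 ∧ (Bl w).1 < (Bl v).1) ∧
      (inTL w v ↔ (Tf v).1 < (Tf w).1 ∧ (Tf w).1 ≤ (Tl w).1 ∧ (Tl w).1 < (Tl v).1) := by
  intro v hv w hw _
  have auxB : ∀ u ∈ S, ∃ a, IsBottomAuxBefore S' u (Bf u) a := fun u hu => by
    obtain ⟨a, ha, hbot, hx, hy, hstrip, -⟩ := haux_b u hu
    exact ⟨a, ha, hbot, hx, hy, hstrip⟩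
  have auxB' : ∀ u ∈ S, ∃ a, IsBottomAuxAfter S' u (Bl u) a := fun u hu => by
    obtain ⟨a, ha, hbot, hx, hy, -, hstrip⟩ := haux_b' u hu
    exact ⟨a, ha, hbot, hx, hy, hstrip⟩
  have auxT : ∀ u ∈ S, ∃ a, IsBottomAuxAfter (-S') (-u) (-Tf u) a := fun u hu => by
    obtain ⟨a, ha, htop, hx, hy, -, hstrip⟩ := haux_t u hu
    exact ⟨-a, isBottomAuxAfter_neg ha htop hx hy hstrip⟩
  have auxT' : ∀ u ∈ S, ∃ a, IsBottomAuxBefore (-S') (-u) (-Tl u) a := fun u hu => by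
    obtain ⟨a, ha, htop, hx, hy, hstrip, -⟩ := haux_t' u hu
    exact ⟨-a, isBottomAuxBefore_neg ha htop hx hy hstrip⟩
  refine ⟨inTL_iff_of_bottomNbrs hS' (hBf v hv) (hBl v hv) (hBf w hw) (hBl w hw)
    (auxB v hv) (auxB' v hv) (auxB w hw) (auxB' w hw), ?_⟩
  have top := inTL_iff_of_bottomNbrs hS'.neg (IsLastTopNbr.neg (hTl v hv))
    (IsFirstTopNbr.neg (hTf v hv)) (IsLastTopNbr.neg (hTl w hw)) (IsFirstTopNbr.neg (hTf w hw))
    (auxT' v hv) (auxT v hv) (auxT' w hw) (auxT w hw)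
  rw [inTL_neg] at top
  simp only [Prod.fst_neg, neg_lt_neg_iff, neg_le_neg_iff] at top
  rw [top]
  tauto

/-- let `S'` be the augmentation of the original point set `S` obtained
by adding, for every original point `v`, the four auxiliary boundary points
`v_b = (v.1 − ε, Bfirst(v).2 − ε)`, `v_b' = (Blast(v).1 + ε, v.2 + ε)` on the bottom
boundary and `v_t = (Tfirst(v).1 − ε, v.2 − ε)`, `v_t' = (v.1 + ε, Tlast(v).2 + ε)` on
the top boundary (described below by their positions and the emptiness of the offset
strips). Here `Bf, Bl, Tf, Tl` are the extreme boundary neighbours (first/last in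
boundary order, i.e. by x-coordinate) in `S'`. Then for any two original points
`v, w`: `w` lies in the bottom-right quadrant of `v` iff
`Bfirst(v) < Bfirst(w) ≤ Blast(w) < Blast(v)` in bottom-boundary order, and `w` lies
in the top-left quadrant of `v` iff `Tfirst(v) < Tfirst(w) ≤ Tlast(w) < Tlast(v)`. -/
theorem stmt17 (S S' : Finset (ℝ × ℝ)) (hsub : S ⊆ S') (hS' : DistinctCoords S')
    (Bf Bl Tf Tl : ℝ × ℝ → ℝ × ℝ)
    (hBf : ∀ v ∈ S, Bf v ∈ S' ∧ onBottom S' (Bf v) ∧ (pGraph S').Adj v (Bf v) ∧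
      ∀ q ∈ S', onBottom S' q → (pGraph S').Adj v q → (Bf v).1 ≤ q.1)
    (hBl : ∀ v ∈ S, Bl v ∈ S' ∧ onBottom S' (Bl v) ∧ (pGraph S').Adj v (Bl v) ∧
      ∀ q ∈ S', onBottom S' q → (pGraph S').Adj v q → q.1 ≤ (Bl v).1)
    (hTf : ∀ v ∈ S, Tf v ∈ S' ∧ onTop S' (Tf v) ∧ (pGraph S').Adj v (Tf v) ∧
      ∀ q ∈ S', onTop S' q → (pGraph S').Adj v q → (Tf v).1 ≤ q.1)
    (hTl : ∀ v ∈ S, Tl v ∈ S' ∧ onTop S' (Tl v) ∧ (pGraph S').Adj v (Tl v) ∧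
      ∀ q ∈ S', onTop S' q → (pGraph S').Adj v q → q.1 ≤ (Tl v).1)
    -- the auxiliary point `v_b = (v.1 − ε, Bfirst(v).2 − ε)`:
    (haux_b : ∀ v ∈ S, ∃ vb ∈ S', onBottom S' vb ∧
      vb.1 < v.1 ∧ vb.2 < (Bf v).2 ∧
      (∀ q ∈ S', q ≠ vb → ¬ (vb.1 ≤ q.1 ∧ q.1 < v.1)) ∧
      (∀ q ∈ S', q ≠ vb → ¬ (vb.2 ≤ q.2 ∧ q.2 < (Bf v).2)))
    -- the auxiliary point `v_b' = (Blast(v).1 + ε, v.2 + ε)`: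
    (haux_b' : ∀ v ∈ S, ∃ vb' ∈ S', onBottom S' vb' ∧
      (Bl v).1 < vb'.1 ∧ v.2 < vb'.2 ∧
      (∀ q ∈ S', q ≠ vb' → ¬ ((Bl v).1 < q.1 ∧ q.1 ≤ vb'.1)) ∧
      (∀ q ∈ S', q ≠ vb' → ¬ (v.2 < q.2 ∧ q.2 ≤ vb'.2)))
    -- the auxiliary point `v_t = (Tfirst(v).1 − ε, v.2 − ε)`:
    (haux_t : ∀ v ∈ S, ∃ vt ∈ S', onTop S' vt ∧
      vt.1 < (Tf v).1 ∧ vt.2 < v.2 ∧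
      (∀ q ∈ S', q ≠ vt → ¬ (vt.1 ≤ q.1 ∧ q.1 < (Tf v).1)) ∧
      (∀ q ∈ S', q ≠ vt → ¬ (vt.2 ≤ q.2 ∧ q.2 < v.2)))
    -- the auxiliary point `v_t' = (v.1 + ε, Tlast(v).2 + ε)`:
    (haux_t' : ∀ v ∈ S, ∃ vt' ∈ S', onTop S' vt' ∧
      v.1 < vt'.1 ∧ (Tl v).2 < vt'.2 ∧
      (∀ q ∈ S', q ≠ vt' → ¬ (v.1 < q.1 ∧ q.1 ≤ vt'.1)) ∧
      (∀ q ∈ S', q ≠ vt' → ¬ ((Tl v).2 < q.2 ∧ q.2 ≤ vt'.2))) :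
    ∀ v ∈ S, ∀ w ∈ S, v ≠ w →
      (inTL v w ↔ (Bf v).1 < (Bf w).1 ∧ (Bf w).1 ≤ (Bl w).1 ∧ (Bl w).1 < (Bl v).1) ∧
      (inTL w v ↔ (Tf v).1 < (Tf w).1 ∧ (Tf w).1 ≤ (Tl w).1 ∧ (Tl w).1 < (Tl v).1) :=
  stmt17_general S S' hS' Bf Bl Tf Tl hBf hBl hTf hTl haux_b haux_b' haux_t haux_t'
end
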